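/- arXiv:2406.17653 — 2 statements merged into one kernel-verified Lean document; each statement's English description precedes it below -/
import Mathlib

section
/- For a graph in which every vertex has degree at most v, the number of connected subsets of vertices that contain a given vertex α and have exactly s vertices in total is at most (v·e)^{s-1}, where e is the base of the natural logarithm. -/
/-!
Explore a connected set `A ∋ α` of size `s` one vertex at a time, always adding some vertex of
`A` adjacent to the vertices explored so far. For each of the `s - 1` vertices after `α`, record
the index `i < s` of its earliest explored neighbour and its position `< v` in the neighbourhood
of that neighbour. This `(s - 1)`-subset of `[s] × [v]` lets one replay the exploration, so it
determines `A`. Hence there are at most `C(sv, s - 1) ≤ (sv)^(s-1) / (s-1)! ≤ (ev)^(s-1)` such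
sets, the last step being `s^(s-1) ≤ e^(s-1) (s-1)!`.
-/

open Finset

lemma succ_pow_le_exp_pow_mul_factorial (k : ℕ) :
    ((k + 1 : ℕ) : ℝ) ^ k ≤ Real.exp 1 ^ k * k.factorial := by
  induction k with
  | zero => simp
  | succ k ih =>
    have hk : ((k + 1 : ℕ) : ℝ) ≠ 0 := by positivity
    calc ((k + 1 + 1 : ℕ) : ℝ) ^ (k + 1)
        = ((k + 1 : ℕ) : ℝ) ^ (k + 1) * (1 + ((k + 1 : ℕ) : ℝ)⁻¹) ^ (k + 1) := by
          rw [← mul_pow, mul_add, mul_inv_cancel₀ hk]; push_cast; ring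
      _ ≤ ((k + 1 : ℕ) : ℝ) ^ (k + 1) * Real.exp 1 := by
          gcongr; exact Real.one_add_inv_pow_le_exp
      _ = (k + 1 : ℕ) * ((k + 1 : ℕ) : ℝ) ^ k * Real.exp 1 := by ring
      _ ≤ (k + 1 : ℕ) * (Real.exp 1 ^ k * k.factorial) * Real.exp 1 := by gcongr
      _ = Real.exp 1 ^ (k + 1) * (k + 1).factorial := by
          push_cast [Nat.factorial_succ]; ring

lemma choose_mul_le_exp_mul_pow (v s : ℕ) :
    ((s * v).choose (s - 1) : ℝ) ≤ (v * Real.exp 1) ^ (s - 1) := by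
  rcases s with _ | k
  · simp
  rw [Nat.add_sub_cancel]
  have hfact : (0 : ℝ) < k.factorial := by positivity
  calc ((((k + 1) * v).choose k : ℕ) : ℝ) ≤ (((k + 1) * v : ℕ) : ℝ) ^ k / k.factorial :=
        Nat.choose_le_pow_div k _
    _ = ((k + 1 : ℕ) : ℝ) ^ k / k.factorial * (v : ℝ) ^ k := by
        rw [Nat.cast_mul, mul_pow]; ring
    _ ≤ Real.exp 1 ^ k * (v : ℝ) ^ k := by
        gcongr
        exact (div_le_iff₀ hfact).2 (succ_pow_le_exp_pow_mul_factorial k)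
    _ = (v * Real.exp 1) ^ k := by ring

namespace SimpleGraph

variable {V : Type*} [DecidableEq V] (G : SimpleGraph V)

section NeighborIndex

variable [G.LocallyFinite]

noncomputable def neighborIndex (x y : V) : ℕ :=
  if h : y ∈ G.neighborFinset x then (G.neighborFinset x).equivFin ⟨y, h⟩ else 0

lemma neighborIndex_lt_degree {x y : V} (h : G.Adj x y) : G.neighborIndex x y < G.degree x := by
  rw [neighborIndex, dif_pos ((G.mem_neighborFinset x y).2 h), ← card_neighborFinset_eq_degree]
  exact Fin.is_lt _

lemma neighborIndex_injOn (x : V) : Set.InjOn (G.neighborIndex x) (G.neighborSet x) := by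
  intro y hy z hz h
  have hy' : y ∈ G.neighborFinset x := (G.mem_neighborFinset x y).2 hy
  have hz' : z ∈ G.neighborFinset x := (G.mem_neighborFinset x z).2 hz
  rw [neighborIndex, neighborIndex, dif_pos hy', dif_pos hz'] at h
  simpa using (G.neighborFinset x).equivFin.injective (Fin.ext h)

end NeighborIndex

variable [DecidableRel G.Adj]

def frontierIn (A B : Finset V) : Finset V := {y ∈ A \ B | ∃ x ∈ B, G.Adj x y}

lemma frontierIn_nonempty {A B : Finset V} (hconn : (G.induce (A : Set V)).Preconnected)
    (hBA : B ⊆ A) {b a : V} (hb : b ∈ B) (ha : a ∈ A) (haB : a ∉ B) :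
    (G.frontierIn A B).Nonempty := by
  obtain ⟨w⟩ := hconn ⟨b, hBA hb⟩ ⟨a, ha⟩
  obtain ⟨d, -, hd₁, hd₂⟩ := w.exists_boundary_dart {x | (x : V) ∈ B} hb haB
  exact ⟨d.snd, mem_filter.2 ⟨mem_sdiff.2 ⟨d.snd.2, hd₂⟩, d.fst, hd₁, d.adj⟩⟩

section Exploration

variable (α : V) (A : Finset V)

-- The choice depends on the frontier alone, which is what lets the code replay the exploration.
noncomputable def nextVertex (B : Finset V) : V :=
  if h : (G.frontierIn A B).Nonempty then Classical.choose h else α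

noncomputable def exploredSet : ℕ → Finset V
  | 0 => {α}
  | k + 1 => insert (G.nextVertex α A (exploredSet k)) (exploredSet k)

noncomputable def exploredVertex : ℕ → V
  | 0 => α
  | k + 1 => G.nextVertex α A (G.exploredSet α A k)

variable {α A}

lemma nextVertex_mem_frontierIn {B : Finset V} (h : (G.frontierIn A B).Nonempty) :
    G.nextVertex α A B ∈ G.frontierIn A B := by
  rw [nextVertex, dif_pos h]
  exact Classical.choose_spec h

lemma nextVertex_mem (hA : α ∈ A) (B : Finset V) : G.nextVertex α A B ∈ A := by
  by_cases h : (G.frontierIn A B).Nonempty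
  · exact (mem_sdiff.1 (mem_filter.1 (G.nextVertex_mem_frontierIn h)).1).1
  · rwa [nextVertex, dif_neg h]

lemma exploredSet_eq_image (k : ℕ) :
    G.exploredSet α A k = (range (k + 1)).image (G.exploredVertex α A) := by
  induction k with
  | zero => rfl
  | succ k ih => rw [range_add_one, image_insert, ← ih]; rfl

lemma root_mem_exploredSet (k : ℕ) : α ∈ G.exploredSet α A k := by
  rw [exploredSet_eq_image]
  exact mem_image_of_mem _ (mem_range.2 k.succ_pos)

lemma exploredSet_subset (hA : α ∈ A) (k : ℕ) : G.exploredSet α A k ⊆ A := by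
  induction k with
  | zero => exact singleton_subset_iff.2 hA
  | succ k ih => exact insert_subset (G.nextVertex_mem hA _) ih

lemma frontierIn_exploredSet_nonempty (hA : α ∈ A) (hconn : (G.induce (A : Set V)).Connected)
    {k : ℕ} (hk : #(G.exploredSet α A k) < #A) :
    (G.frontierIn A (G.exploredSet α A k)).Nonempty := by
  obtain ⟨a, ha, haB⟩ := exists_mem_notMem_of_card_lt_card hk
  exact G.frontierIn_nonempty hconn.preconnected (G.exploredSet_subset hA k)
    (G.root_mem_exploredSet k) ha haB

lemma card_exploredSet (hA : α ∈ A) (hconn : (G.induce (A : Set V)).Connected)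
    {k : ℕ} (hk : k < #A) : #(G.exploredSet α A k) = k + 1 := by
  induction k with
  | zero => rfl
  | succ k ih =>
    have ih := ih (by omega)
    have hnew := mem_filter.1 (G.nextVertex_mem_frontierIn (α := α)
      (G.frontierIn_exploredSet_nonempty hA hconn (k := k) (by omega)))
    rw [exploredSet, card_insert_of_notMem (mem_sdiff.1 hnew.1).2, ih]

lemma exploredVertex_succ_mem_frontierIn (hA : α ∈ A)
    (hconn : (G.induce (A : Set V)).Connected) {k : ℕ} (hk : k + 1 < #A) :
    G.exploredVertex α A (k + 1) ∈ G.frontierIn A (G.exploredSet α A k) :=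
  G.nextVertex_mem_frontierIn <| G.frontierIn_exploredSet_nonempty hA hconn <| by
    rw [G.card_exploredSet hA hconn (by omega)]; omega

lemma image_exploredVertex (hA : α ∈ A) (hconn : (G.induce (A : Set V)).Connected) :
    (range #A).image (G.exploredVertex α A) = A := by
  have hpos : 0 < #A := card_pos.2 ⟨α, hA⟩
  have hlast := G.card_exploredSet hA hconn (Nat.sub_one_lt_of_lt hpos)
  rw [Nat.sub_add_cancel hpos] at hlast
  rw [← Nat.sub_add_cancel hpos, ← exploredSet_eq_image]
  exact eq_of_subset_of_card_le (G.exploredSet_subset hA _) hlast.ge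

lemma exploredVertex_mem (hA : α ∈ A) (hconn : (G.induce (A : Set V)).Connected) {j : ℕ}
    (hj : j < #A) : G.exploredVertex α A j ∈ A := by
  have h := mem_image_of_mem (G.exploredVertex α A) (mem_range.2 hj)
  rwa [G.image_exploredVertex hA hconn] at h

lemma injOn_exploredVertex (hA : α ∈ A) (hconn : (G.induce (A : Set V)).Connected) :
    Set.InjOn (G.exploredVertex α A) (range #A) := by
  rw [← card_image_iff, G.image_exploredVertex hA hconn, card_range]

lemma exists_adj_exploredVertex (hA : α ∈ A) (hconn : (G.induce (A : Set V)).Connected)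
    {j : ℕ} (hj₀ : 0 < j) (hj : j < #A) :
    ∃ i < j, G.Adj (G.exploredVertex α A i) (G.exploredVertex α A j) := by
  obtain ⟨k, rfl⟩ := Nat.exists_eq_add_one_of_ne_zero hj₀.ne'
  obtain ⟨x, hx, hadj⟩ := (mem_filter.1 (G.exploredVertex_succ_mem_frontierIn hA hconn hj)).2
  rw [exploredSet_eq_image] at hx
  obtain ⟨i, hi, rfl⟩ := mem_image.1 hx
  exact ⟨i, mem_range.1 hi, hadj⟩

open Classical in
noncomputable def exploreParent (α : V) (A : Finset V) (j : ℕ) : ℕ :=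
  if h : ∃ i, G.Adj (G.exploredVertex α A i) (G.exploredVertex α A j) then Nat.find h else 0

lemma exploreParent_lt_and_adj (hA : α ∈ A) (hconn : (G.induce (A : Set V)).Connected)
    {j : ℕ} (hj₀ : 0 < j) (hj : j < #A) :
    G.exploreParent α A j < j ∧
      G.Adj (G.exploredVertex α A (G.exploreParent α A j)) (G.exploredVertex α A j) := by
  classical
  obtain ⟨i, hij, hadj⟩ := G.exists_adj_exploredVertex hA hconn hj₀ hj
  have hex : ∃ i, G.Adj (G.exploredVertex α A i) (G.exploredVertex α A j) := ⟨i, hadj⟩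
  rw [exploreParent, dif_pos hex]
  exact ⟨(Nat.find_le hadj).trans_lt hij, Nat.find_spec hex⟩

lemma exploreParent_le {i j : ℕ}
    (hadj : G.Adj (G.exploredVertex α A i) (G.exploredVertex α A j)) :
    G.exploreParent α A j ≤ i := by
  classical
  rw [exploreParent, dif_pos ⟨i, hadj⟩]
  exact Nat.find_le hadj

variable [G.LocallyFinite]

noncomputable def exploreCode (α : V) (A : Finset V) : Finset (ℕ × ℕ) :=
  (Ico 1 #A).image fun j =>
    (G.exploreParent α A j,
      G.neighborIndex (G.exploredVertex α A (G.exploreParent α A j)) (G.exploredVertex α A j))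

lemma card_exploreCode (hA : α ∈ A) (hconn : (G.induce (A : Set V)).Connected) :
    #(G.exploreCode α A) = #A - 1 := by
  rw [exploreCode, card_image_of_injOn, Nat.card_Ico]
  intro j hj j' hj' h
  simp only [coe_Ico, Set.mem_Ico, Prod.mk.injEq] at hj hj' h
  obtain ⟨hparent, hindex⟩ := h
  have hadj := (G.exploreParent_lt_and_adj hA hconn hj.1 hj.2).2
  have hadj' := (G.exploreParent_lt_and_adj hA hconn hj'.1 hj'.2).2
  rw [hparent] at hadj hindex
  exact G.injOn_exploredVertex hA hconn (mem_range.2 hj.2) (mem_range.2 hj'.2)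
    (G.neighborIndex_injOn _ hadj hadj' hindex)

lemma exploreCode_subset (hA : α ∈ A) (hconn : (G.induce (A : Set V)).Connected) {v : ℕ}
    (hdeg : ∀ x, G.degree x ≤ v) : G.exploreCode α A ⊆ range #A ×ˢ range v := by
  intro p hp
  obtain ⟨j, hj, rfl⟩ := mem_image.1 hp
  obtain ⟨hj₀, hj⟩ := mem_Ico.1 hj
  obtain ⟨hlt, hadj⟩ := G.exploreParent_lt_and_adj hA hconn hj₀ hj
  exact mem_product.2 ⟨mem_range.2 (hlt.trans hj),
    mem_range.2 ((G.neighborIndex_lt_degree hadj).trans_le (hdeg _))⟩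

lemma coe_frontierIn_exploredSet (hA : α ∈ A) (hconn : (G.induce (A : Set V)).Connected)
    (k : ℕ) :
    (G.frontierIn A (G.exploredSet α A k) : Set V) =
      {y | y ∉ G.exploredSet α A k ∧ ∃ p ∈ G.exploreCode α A, p.1 ≤ k ∧
        G.Adj (G.exploredVertex α A p.1) y ∧
        G.neighborIndex (G.exploredVertex α A p.1) y = p.2} := by
  ext y
  simp only [frontierIn, coe_filter, mem_sdiff, Set.mem_ofPred_eq, exploreCode, mem_image,
    exploredSet_eq_image, mem_range, mem_Ico]
  constructor
  · rintro ⟨⟨hyA, hyB⟩, _, ⟨i, hi, rfl⟩, hadj⟩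
    rw [← G.image_exploredVertex hA hconn] at hyA
    obtain ⟨j, hj, rfl⟩ := mem_image.1 hyA
    have hkj : k < j := by
      by_contra! hjk
      exact hyB ⟨j, by omega, rfl⟩
    have hparent := G.exploreParent_lt_and_adj hA hconn (by omega) (mem_range.1 hj)
    exact ⟨hyB, _, ⟨j, ⟨by omega, mem_range.1 hj⟩, rfl⟩,
      (G.exploreParent_le hadj).trans (by omega), hparent.2, rfl⟩
  · rintro ⟨hyB, _, ⟨j, hj, rfl⟩, hk, hadj, hindex⟩
    have hparent := G.exploreParent_lt_and_adj hA hconn hj.1 hj.2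
    have hy := G.neighborIndex_injOn _ hadj hparent.2 hindex
    subst hy
    exact ⟨⟨G.exploredVertex_mem hA hconn hj.2, hyB⟩, _, ⟨_, by omega, rfl⟩, hadj⟩

lemma exploredVertex_eq_of_exploreCode_eq {B : Finset V}
    (hA : α ∈ A) (hconnA : (G.induce (A : Set V)).Connected)
    (hB : α ∈ B) (hconnB : (G.induce (B : Set V)).Connected)
    (h : G.exploreCode α A = G.exploreCode α B) :
    G.exploredVertex α A = G.exploredVertex α B := by
  funext k
  induction k using Nat.strong_induction_on with
  | _ k ih =>
  rcases k with _ | k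
  · rfl
  have hset : G.exploredSet α A k = G.exploredSet α B k := by
    rw [exploredSet_eq_image, exploredSet_eq_image]
    exact image_congr fun i hi => ih i (by simpa [Nat.lt_succ_iff] using hi)
  have hfrontier :
      G.frontierIn A (G.exploredSet α A k) = G.frontierIn B (G.exploredSet α B k) := by
    apply coe_injective
    rw [G.coe_frontierIn_exploredSet hA hconnA, G.coe_frontierIn_exploredSet hB hconnB, hset, h]
    ext y
    refine and_congr_right fun _ => exists_congr fun p =>
      and_congr_right fun _ => and_congr_right fun hp => ?_
    rw [ih p.1 (Nat.lt_succ_of_le hp)]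
  show G.nextVertex α A _ = G.nextVertex α B _
  rw [nextVertex, nextVertex, hfrontier]

lemma exploreCode_injOn :
    Set.InjOn (G.exploreCode α) {A | α ∈ A ∧ (G.induce (A : Set V)).Connected} := by
  rintro A ⟨hA, hconnA⟩ B ⟨hB, hconnB⟩ h
  have hcard : #A = #B := by
    have hcode := G.card_exploreCode hA hconnA
    rw [h, G.card_exploreCode hB hconnB] at hcode
    have := card_pos.2 ⟨α, hA⟩
    have := card_pos.2 ⟨α, hB⟩
    omega
  calc A = (range #A).image (G.exploredVertex α A) := (G.image_exploredVertex hA hconnA).symm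
    _ = (range #B).image (G.exploredVertex α B) := by
        rw [hcard, G.exploredVertex_eq_of_exploreCode_eq hA hconnA hB hconnB h]
    _ = B := G.image_exploredVertex hB hconnB

end Exploration

theorem card_connected_finsets_le_choose [G.LocallyFinite] {v : ℕ}
    (hdeg : ∀ x, G.degree x ≤ v) (α : V) (s : ℕ) :
    Nat.card {A : Finset V // α ∈ A ∧ #A = s ∧ (G.induce (A : Set V)).Connected} ≤
      (s * v).choose (s - 1) := by
  let code (A : {A : Finset V // α ∈ A ∧ #A = s ∧ (G.induce (A : Set V)).Connected}) :
      powersetCard (s - 1) (range s ×ˢ range v) :=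
    ⟨G.exploreCode α A, by
      obtain ⟨A, hA, rfl, hconn⟩ := A
      exact mem_powersetCard.2
        ⟨G.exploreCode_subset hA hconn hdeg, G.card_exploreCode hA hconn⟩⟩
  have hcode : Function.Injective code := fun A B h =>
    Subtype.ext <|
      G.exploreCode_injOn ⟨A.2.1, A.2.2.2⟩ ⟨B.2.1, B.2.2.2⟩ (congrArg Subtype.val h)
  calc _ ≤ Nat.card (powersetCard (s - 1) (range s ×ˢ range v)) :=
        Nat.card_le_card_of_injective code hcode
    _ = (s * v).choose (s - 1) := by
        rw [Nat.card_eq_fintype_card, Fintype.card_coe, card_powersetCard, card_product,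
          card_range, card_range]

end SimpleGraph

theorem counting_connected_sets_general {V : Type*} [Fintype V] [DecidableEq V]
    (G : SimpleGraph V) [DecidableRel G.Adj]
    (v : ℕ) (hdeg : ∀ x : V, G.degree x ≤ v)
    (α : V) (s : ℕ) :
    (Nat.card {A : Finset V // α ∈ A ∧ A.card = s ∧ (G.induce (A : Set V)).Connected} : ℝ)
      ≤ (v * Real.exp 1) ^ (s - 1) :=
  calc _ ≤ ((s * v).choose (s - 1) : ℝ) := by
        exact_mod_cast G.card_connected_finsets_le_choose hdeg α s
    _ ≤ (v * Real.exp 1) ^ (s - 1) := choose_mul_le_exp_mul_pow v s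

/-- Counting lemma: in a graph of max degree ≤ v, the number of connected
vertex sets of size `s` containing a fixed vertex `α` is at most `(v·e)^(s-1)`. -/
theorem counting_connected_sets {V : Type*} [Fintype V] [DecidableEq V]
    (G : SimpleGraph V) [DecidableRel G.Adj]
    (v : ℕ) (hv : 1 ≤ v) (hdeg : ∀ x : V, G.degree x ≤ v)
    (α : V) (s : ℕ) (hs : 1 ≤ s) :
    (Nat.card {A : Finset V // α ∈ A ∧ A.card = s ∧ (G.induce (A : Set V)).Connected} : ℝ)
      ≤ (v * Real.exp 1) ^ (s - 1) :=
  counting_connected_sets_general G v hdeg α s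
end

section
/- In the single-shot patch growth of a surface code from distance d₁ to distance d ≥ d₁, any Z-type logical error chain that is undetected by the deterministic stabilizers in the grown region must have weight at least d₁; formally, modeling the grown code region as a d × d grid where stabilizers outside a d₁ × d₁ corner are deterministic, a path of errors crossing the code from one Z-boundary to the opposite one while avoiding all deterministic stabilizer violations must contain at least d₁ qubits within the original d₁ × d₁ patch. -/
/-!
Along the path the column index changes by at most one per step, so by a discrete
intermediate value argument the path visits every column between `0` and `d - 1`. Each of the
`d₁` columns of the corner patch is therefore met at some path vertex, which the detection
hypothesis places inside the patch; vertices in different columns are distinct.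
-/

theorem Fin.exists_eq_of_succ_le_add_one {n : ℕ} {f : Fin (n + 1) → ℕ}
    (hf : ∀ i : Fin n, f i.succ ≤ f i.castSucc + 1) {c : ℕ}
    (h0 : f 0 ≤ c) (hlast : c ≤ f (Fin.last n)) : ∃ i, f i = c := by
  induction n with
  | zero => exact ⟨0, le_antisymm h0 (by simpa using hlast)⟩
  | succ n ih =>
    by_cases hc : c ≤ f (Fin.last n).castSucc
    · obtain ⟨i, hi⟩ := ih (f := f ∘ Fin.castSucc) (fun i => hf i.castSucc) h0 hc
      exact ⟨i.castSucc, hi⟩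
    · have := hf (Fin.last n)
      exact ⟨Fin.last (n + 1), by rw [← Fin.succ_last] at hlast ⊢; omega⟩

theorem single_shot_patch_growth_distance_general
    (d d₁ : ℕ) (hdd : d₁ ≤ d) (n : ℕ)
    (P : Fin (n + 1) → Fin d × Fin d)
    (hadj : ∀ i : Fin n,
      ((P i.castSucc).1.val : ℤ) - (P i.succ).1.val ≤ 1 ∧
      ((P i.succ).1.val : ℤ) - (P i.castSucc).1.val ≤ 1)
    (hstart : (P 0).1.val = 0)
    (hend : (P (Fin.last n)).1.val = d - 1)
    (hdetect : ∀ i : Fin (n + 1),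
      d - d₁ ≤ (P i).1.val → d - d₁ ≤ (P i).2.val) :
    d₁ ≤ ((Finset.univ.image P).filter
      (fun x : Fin d × Fin d => d - d₁ ≤ x.1.val ∧ d - d₁ ≤ x.2.val)).card := by
  have hd : 0 < d := Fin.pos (P 0).1
  have hvisit : ∀ c ≤ d - 1, ∃ i, (P i).1.val = c := fun c hc =>
    Fin.exists_eq_of_succ_le_add_one (f := fun i => (P i).1.val)
      (fun i => by have := (hadj i).2; omega) (by omega) (by omega)
  have hsurj : Set.SurjOn (fun x : Fin d × Fin d => x.1.val)
      ((Finset.univ.image P).filter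
        (fun x : Fin d × Fin d => d - d₁ ≤ x.1.val ∧ d - d₁ ≤ x.2.val))
      (Finset.Icc (d - d₁) (d - 1)) := by
    intro c hc
    obtain ⟨hlo, hhi⟩ := Finset.mem_Icc.mp hc
    obtain ⟨i, hi⟩ := hvisit c hhi
    refine ⟨P i, ?_, hi⟩
    simp only [Finset.coe_filter, Finset.mem_image, Finset.mem_univ, true_and, Set.mem_ofPred_eq]
    exact ⟨⟨i, rfl⟩, hi ▸ hlo, hdetect i (hi ▸ hlo)⟩
  have := Finset.card_le_card_of_surjOn _ hsurj
  rw [Nat.card_Icc] at this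
  omega

/-- Single-shot patch growth keeps distance d₁: model the grown code as a d×d grid
with the original patch the d₁×d₁ corner subgrid {(x,y) | d-d₁ ≤ x, d-d₁ ≤ y}.
A logical error is a path of grid-adjacent qubits crossing from the left boundary
(column 0) to the right boundary (column d-1); avoiding all deterministic stabilizer
violations forces any path vertex in the columns of the grown strip to lie inside the
corner patch. Then the path contains at least d₁ distinct qubits within the patch. -/
theorem single_shot_patch_growth_distance
    (d d₁ : ℕ) (h1 : 1 ≤ d₁) (hdd : d₁ ≤ d) (n : ℕ)
    (P : Fin (n + 1) → Fin d × Fin d)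
    (hadj : ∀ i : Fin n,
      ((P i.castSucc).1.val : ℤ) - (P i.succ).1.val ≤ 1 ∧
      ((P i.succ).1.val : ℤ) - (P i.castSucc).1.val ≤ 1)
    (hstart : (P 0).1.val = 0)
    (hend : (P (Fin.last n)).1.val = d - 1)
    (hdetect : ∀ i : Fin (n + 1),
      d - d₁ ≤ (P i).1.val → d - d₁ ≤ (P i).2.val) :
    d₁ ≤ ((Finset.univ.image P).filter
      (fun x : Fin d × Fin d => d - d₁ ≤ x.1.val ∧ d - d₁ ≤ x.2.val)).card :=
  single_shot_patch_growth_distance_general d d₁ hdd n P hadj hstart hend hdetect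
end
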